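/- Let S be a bigraded staircase complex over F₂[W,Z] and let f: S → S be a chain map preserving the (gr_W, gr_Z)-bigrading which is a chain homotopy equivalence. Then f equals the identity map. -/

import Mathlib

/-!
Since `d` has bidegree `(-1, -1)`, the generators satisfy
`gr(x_{2i+1}) = gr(x_{2i}) + (1 - 2aᵢ, 1)` and `gr(x_{2i+2}) = gr(x_{2i+1}) + (-1, 2bᵢ - 1)`,
so `gr_W` strictly decreases and `gr_Z` strictly increases along `x₀, …, x_{2n}`. A term `x_j W^p Z^q`
of `f(x_i)` forces `gr(x_j) = gr(x_i) + (2p, 2q)`, impossible for `j ≠ i` since then one grading of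
`x_j` is below that of `x_i`; hence `f` is diagonal with entries in `F₂`. Modulo `(W, Z)` the differential vanishes, so a homotopy
inverse of `f` becomes an honest inverse of this diagonal `F₂`-matrix, whose entries are then all `1`.
-/

noncomputable section

open MvPolynomial

/-- `R = F₂[W,Z]`. -/
abbrev R2 : Type := MvPolynomial (Fin 2) (ZMod 2)

def Wv : R2 := X 0
def Zv : R2 := X 1

/-- Coefficient of the monomial `W^p Z^q`. -/
def coeffAt (p q : ℕ) (f : R2) : ZMod 2 :=
  MvPolynomial.coeff (Finsupp.single (0 : Fin 2) p + Finsupp.single (1 : Fin 2) q) f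

/-- The staircase differential as an endomorphism matrix of the total module on
generators `x_0, …, x_{2n}`: `d(x_{2i+1}) = x_{2i}·W^{a_i} + x_{2i+2}·Z^{b_i}`,
`d(x_{2i}) = 0`. -/
def stairD (n : ℕ) (a b : Fin n → ℕ) :
    Matrix (Fin (2 * n + 1)) (Fin (2 * n + 1)) R2 :=
  fun j i =>
    if h : (i : ℕ) % 2 = 1 then
      if (j : ℕ) + 1 = (i : ℕ) then Wv ^ a ⟨(i : ℕ) / 2, by have := i.isLt; omega⟩
      else if (j : ℕ) = (i : ℕ) + 1 then Zv ^ b ⟨(i : ℕ) / 2, by have := i.isLt; omega⟩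
      else 0
    else 0

/-- A matrix `M` (representing an `R`-module map) is homogeneous of bidegree `(dW, dZ)`
with respect to generator bigradings, where `W` has bidegree `(−2,0)` and `Z` has
`(0,−2)`: every monomial `W^p Z^q` occurring in the `(j,i)` entry satisfies the
corresponding grading equations. -/
def hasBideg {k l : ℕ} (grWs grZs : Fin k → ℤ) (grWt grZt : Fin l → ℤ)
    (dW dZ : ℤ) (M : Matrix (Fin l) (Fin k) R2) : Prop :=
  ∀ (i : Fin k) (j : Fin l) (p q : ℕ), coeffAt p q (M j i) ≠ 0 →
    grWt j - 2 * (p : ℤ) = grWs i + dW ∧ grZt j - 2 * (q : ℤ) = grZs i + dZ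


open Matrix

lemma coeff_eq_coeffAt (m : Fin 2 →₀ ℕ) (f : R2) :
    coeff m f = coeffAt (m 0) (m 1) f := by
  rw [coeffAt]
  congr 1
  ext i
  fin_cases i <;> simp

section hasBideg

variable {k l : ℕ} {grWs grZs : Fin k → ℤ} {grWt grZt : Fin l → ℤ} {dW dZ : ℤ}
  {M : Matrix (Fin l) (Fin k) R2}

lemma hasBideg.of_eq_W_pow (hM : hasBideg grWs grZs grWt grZt dW dZ M) {i : Fin k} {j : Fin l}
    {p : ℕ} (hji : M j i = Wv ^ p) :
    grWt j - 2 * (p : ℤ) = grWs i + dW ∧ grZt j = grZs i + dZ := by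
  simpa using hM i j p 0 (by simp [hji, coeffAt, Wv, coeff_X_pow])

lemma hasBideg.of_eq_Z_pow (hM : hasBideg grWs grZs grWt grZt dW dZ M) {i : Fin k} {j : Fin l}
    {q : ℕ} (hji : M j i = Zv ^ q) :
    grWt j = grWs i + dW ∧ grZt j - 2 * (q : ℤ) = grZs i + dZ := by
  simpa using hM i j 0 q (by simp [hji, coeffAt, Zv, coeff_X_pow])

end hasBideg

lemma hasBideg_zero_eq_diagonal {k : ℕ} {grW grZ : Fin k → ℤ} (hW : StrictAnti grW)
    (hZ : StrictMono grZ) {M : Matrix (Fin k) (Fin k) R2} (hM : hasBideg grW grZ grW grZ 0 0 M) :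
    M = diagonal fun i => C (constantCoeff (M i i)) := by
  have hsupp : ∀ i j m, coeff m (M j i) ≠ 0 → j = i ∧ m = 0 := by
    intro i j m hm
    rw [coeff_eq_coeffAt] at hm
    obtain ⟨hWji, hZji⟩ := hM i j (m 0) (m 1) hm
    have hji : j = i := by
      rcases lt_trichotomy j i with hlt | heq | hgt
      · have := hZ hlt; omega
      · exact heq
      · have := hW hgt; omega
    subst hji
    refine ⟨rfl, ?_⟩
    ext x
    fin_cases x <;> simp <;> omega
  ext j i m
  by_cases hji : j = i
  · subst hji
    by_cases hm : m = 0
    · subst hm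
      rw [diagonal_apply_eq, coeff_C, if_pos rfl]
      rfl
    · rw [diagonal_apply_eq, coeff_C, if_neg (Ne.symm hm)]
      exact not_not.1 fun h => hm (hsupp j j m h).2
  · rw [diagonal_apply_ne _ hji, coeff_zero]
    exact not_not.1 fun h => hji (hsupp i j m h).1

lemma eq_one_of_diagonal_mul_eq_one {ι S : Type*} [Fintype ι] [DecidableEq ι] [CommSemiring S]
    [Subsingleton Sˣ] {d : ι → S} {B : Matrix ι ι S} (h : diagonal d * B = 1) : d = 1 := by
  funext i
  have hii := congrFun (congrFun h i) i
  rw [diagonal_mul, one_apply_eq] at hii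
  exact (IsUnit.of_mul_eq_one _ hii).eq_one

section stairD

variable {n : ℕ} {a b : Fin n → ℕ}

lemma stairD_even_odd {m : ℕ} (hm : m < n) :
    stairD n a b ⟨2 * m, by omega⟩ ⟨2 * m + 1, by omega⟩ = Wv ^ a ⟨m, hm⟩ := by
  simp [stairD, Nat.add_div]

lemma stairD_even_succ_odd {m : ℕ} (hm : m < n) :
    stairD n a b ⟨2 * m + 2, by omega⟩ ⟨2 * m + 1, by omega⟩ = Zv ^ b ⟨m, hm⟩ := by
  simp [stairD, Nat.add_div]

lemma stairD_map_constantCoeff (ha : ∀ i, 0 < a i) (hb : ∀ i, 0 < b i) :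
    (stairD n a b).map constantCoeff = 0 := by
  ext j i
  simp only [map_apply, Matrix.zero_apply, stairD]
  split_ifs <;> simp [Wv, Zv, (ha _).ne', (hb _).ne']

variable {grW grZ : Fin (2 * n + 1) → ℤ}

lemma stairD_grading_step (ha : ∀ i, 0 < a i) (hb : ∀ i, 0 < b i)
    (hD : hasBideg grW grZ grW grZ (-1) (-1) (stairD n a b)) (k : Fin (2 * n)) :
    grW k.succ < grW k.castSucc ∧ grZ k.castSucc < grZ k.succ := by
  obtain ⟨m, hm | hm⟩ := Nat.even_or_odd' k
  · have hmn : m < n := by omega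
    have hk : k.castSucc = ⟨2 * m, by omega⟩ := Fin.ext (by simp [hm])
    have hk' : k.succ = ⟨2 * m + 1, by omega⟩ := Fin.ext (by simp [hm])
    have := hD.of_eq_W_pow (stairD_even_odd hmn)
    have := ha ⟨m, hmn⟩
    rw [hk, hk']
    omega
  · have hmn : m < n := by omega
    have hk : k.castSucc = ⟨2 * m + 1, by omega⟩ := Fin.ext (by simp [hm])
    have hk' : k.succ = ⟨2 * m + 2, by omega⟩ := Fin.ext (by simp [hm])
    have := hD.of_eq_Z_pow (stairD_even_succ_odd hmn)
    have := hb ⟨m, hmn⟩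
    rw [hk, hk']
    omega

end stairD

theorem stmt_6_general (n : ℕ) (a b : Fin n → ℕ) (ha : ∀ i, 0 < a i) (hb : ∀ i, 0 < b i)
    (grW grZ : Fin (2 * n + 1) → ℤ)
    (hD : hasBideg grW grZ grW grZ (-1) (-1) (stairD n a b))
    (f : Matrix (Fin (2 * n + 1)) (Fin (2 * n + 1)) R2)
    (hf : hasBideg grW grZ grW grZ 0 0 f)
    (hhtpyEq : ∃ g J J' : Matrix (Fin (2 * n + 1)) (Fin (2 * n + 1)) R2,
      g * stairD n a b = stairD n a b * g ∧
      g * f = 1 + (stairD n a b * J + J * stairD n a b) ∧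
      f * g = 1 + (stairD n a b * J' + J' * stairD n a b)) :
    f = 1 := by
  obtain ⟨g, -, J', -, -, hfg⟩ := hhtpyEq
  have hdiag := hasBideg_zero_eq_diagonal
    (Fin.strictAnti_iff_succ_lt.2 fun k => (stairD_grading_step ha hb hD k).1)
    (Fin.strictMono_iff_lt_succ.2 fun k => (stairD_grading_step ha hb hD k).2) hf
  have hfg₀ := congrArg (constantCoeff : R2 →+* ZMod 2).mapMatrix hfg
  simp only [map_mul, map_add, map_one, RingHom.mapMatrix_apply, stairD_map_constantCoeff ha hb,
    Matrix.zero_mul, Matrix.mul_zero, add_zero] at hfg₀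
  rw [hdiag, diagonal_map (map_zero _)] at hfg₀
  have hunit : (fun i => constantCoeff (f i i)) = 1 :=
    eq_one_of_diagonal_mul_eq_one (by simpa using hfg₀)
  rw [hdiag, ← diagonal_one]
  congr 1
  funext i
  simp [congrFun hunit i]

/-- If `f : S → S` is a bigrading-preserving chain map of a bigraded staircase complex
over `F₂[W,Z]` which is a chain homotopy equivalence, then `f` is the identity. -/
theorem stmt_6 (n : ℕ) (a b : Fin n → ℕ) (ha : ∀ i, 0 < a i) (hb : ∀ i, 0 < b i)
    (grW grZ : Fin (2 * n + 1) → ℤ)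
    (hD : hasBideg grW grZ grW grZ (-1) (-1) (stairD n a b))
    (f : Matrix (Fin (2 * n + 1)) (Fin (2 * n + 1)) R2)
    (hf : hasBideg grW grZ grW grZ 0 0 f)
    (hchain : f * stairD n a b = stairD n a b * f)
    (hhtpyEq : ∃ g J J' : Matrix (Fin (2 * n + 1)) (Fin (2 * n + 1)) R2,
      g * stairD n a b = stairD n a b * g ∧
      g * f = 1 + (stairD n a b * J + J * stairD n a b) ∧
      f * g = 1 + (stairD n a b * J' + J' * stairD n a b)) :
    f = 1 :=
  stmt_6_general n a b ha hb grW grZ hD f hf hhtpyEq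

end
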